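/- On the 33-hole board under 8-move solitaire, the corner-counting lower bound gives: no solution to the central game has fewer than 14 moves. (The actual minimum, found by search, is 15.) -/

import Mathlib

open Finset

abbrev Cell := ℤ × ℤ
abbrev Pos := Finset Cell

/-- The four orthogonal jump directions (4-move solitaire). -/
def dirs4 : Finset Cell := {(1,0),(-1,0),(0,1),(0,-1)}

/-- The eight jump directions (8-move solitaire). -/
def dirs8 : Finset Cell :=
  {(1,0),(-1,0),(0,1),(0,-1),(1,1),(1,-1),(-1,1),(-1,-1)}

/-- A legal jump on `board` with allowed directions `dirs`, taking position `B` to `B'`: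
the peg at `p` jumps over the peg at `p + d` into the empty hole `p + d + d`,
removing the jumped peg. -/
def IsJump (board dirs : Finset Cell) (B B' : Pos) (p d : Cell) : Prop :=
  d ∈ dirs ∧ p ∈ B ∧ p + d ∈ B ∧ p + d + d ∈ board ∧ p + d + d ∉ B ∧
    B' = insert (p + d + d) ((B.erase p).erase (p + d))

/-- A move: one or more consecutive jumps by the same peg, starting at `p` and ending at `q`. -/
inductive Move (board dirs : Finset Cell) : Pos → Pos → Cell → Cell → Prop
  | single {B B' : Pos} {p d : Cell} (h : IsJump board dirs B B' p d) :
      Move board dirs B B' p (p + d + d)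
  | cons {B B' B'' : Pos} {p d q : Cell} (h : IsJump board dirs B B' p d)
      (hm : Move board dirs B' B'' (p + d + d) q) : Move board dirs B B'' p q

/-- A sequence of moves, recorded as a list of (start hole, end hole) pairs. -/
inductive MoveSeq (board dirs : Finset Cell) : Pos → Pos → List (Cell × Cell) → Prop
  | nil (B : Pos) : MoveSeq board dirs B B []
  | cons {B B' B'' : Pos} {p q : Cell} {l : List (Cell × Cell)}
      (h : Move board dirs B B' p q) (hs : MoveSeq board dirs B' B'' l) :
      MoveSeq board dirs B B'' ((p, q) :: l)

/-- The diamond board of "radius" r : all integer points with |x|+|y| ≤ r. -/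
noncomputable def diamondB (r : ℤ) : Finset Cell :=
  ((Finset.Icc (-r) r) ×ˢ (Finset.Icc (-r) r)).filter (fun p => |p.1| + |p.2| ≤ r)

/-- The standard 33-hole cross-shaped board. -/
noncomputable def board33 : Finset Cell :=
  ((Finset.Icc (-3 : ℤ) 3) ×ˢ (Finset.Icc (-3 : ℤ) 3)).filter
    (fun p => |p.1| ≤ 1 ∨ |p.2| ≤ 1)

/-- The 37-hole board (7×7 square minus three holes at each corner). -/
noncomputable def board37 : Finset Cell :=
  ((Finset.Icc (-3 : ℤ) 3) ×ˢ (Finset.Icc (-3 : ℤ) 3)).filter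
    (fun p => |p.1| ≤ 1 ∨ |p.2| ≤ 1 ∨ (|p.1| ≤ 2 ∧ |p.2| ≤ 2))

/-- The central 3×3 block of nine holes. -/
noncomputable def C9 : Finset Cell := (Finset.Icc (-1 : ℤ) 1) ×ˢ (Finset.Icc (-1 : ℤ) 1)

/-!
Give the eight corners weight 5, the four holes `(±1, ±1)` weight 1 and all other holes weight 0,
so that the central game goes from weight 44 to weight 0. A peg on a hole with both coordinates
odd stays on such holes and only jumps over holes of weight 0, so its move lowers the weight by
at most `5 - 1`; any other peg never jumps over a corner and never lands on one, so its move
removes at most the four pegs of weight 1. Every move therefore lowers the weight by at most 4.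
This alone forces 11 moves; a depth-first search over bit-encoded positions, pruned by the same
bound, rules out every solution with at most 13 moves.
-/

def IsOddOdd (c : Cell) : Prop := Odd c.1 ∧ Odd c.2

instance : DecidablePred IsOddOdd := fun c => inferInstanceAs (Decidable (Odd c.1 ∧ Odd c.2))

theorem isOddOdd_add_add (p d : Cell) : IsOddOdd (p + d + d) ↔ IsOddOdd p := by
  simp only [IsOddOdd, Prod.fst_add, Prod.snd_add, Int.odd_iff]
  omega

theorem not_isOddOdd_add {p d : Cell} (hd : d ∈ dirs8) (hp : IsOddOdd p) : ¬IsOddOdd (p + d) := by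
  simp only [dirs8, mem_insert, mem_singleton] at hd
  simp only [IsOddOdd, Prod.fst_add, Prod.snd_add, Int.odd_iff] at hp ⊢
  rcases hd with rfl | rfl | rfl | rfl | rfl | rfl | rfl | rfl <;> simp <;> omega

section Moves

variable {board dirs : Finset Cell} {B B' : Pos} {p d q : Cell}

theorem IsJump.mem_dirs (h : IsJump board dirs B B' p d) : d ∈ dirs := h.1

theorem IsJump.start_mem (h : IsJump board dirs B B' p d) : p ∈ B := h.2.1

theorem IsJump.end_mem (h : IsJump board dirs B B' p d) : p + d + d ∈ board := h.2.2.2.1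

theorem IsJump.add_ne (h : IsJump board dirs B B' p d) : p + d ≠ p := by
  obtain ⟨-, hp, -, -, hl, -⟩ := h
  intro hpd
  rw [hpd, hpd] at hl
  exact hl hp

theorem IsJump.subset (h : IsJump board dirs B B' p d) (hB : B ⊆ board) : B' ⊆ board := by
  obtain ⟨-, -, -, hl, -, rfl⟩ := h
  exact insert_subset hl ((erase_subset _ _).trans ((erase_subset _ _).trans hB))

theorem IsJump.card_add_one (h : IsJump board dirs B B' p d) : #B' + 1 = #B := by
  have hmp := h.add_ne
  obtain ⟨-, hp, hm, -, hl, rfl⟩ := h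
  rw [card_insert_of_notMem fun h' => hl (mem_of_mem_erase (mem_of_mem_erase h')),
    card_erase_add_one (mem_erase.2 ⟨hmp, hm⟩), card_erase_add_one hp]

theorem IsJump.sum_add (f : Cell → ℕ) (h : IsJump board dirs B B' p d) :
    ∑ c ∈ B', f c + f p + f (p + d) = ∑ c ∈ B, f c + f (p + d + d) := by
  have hmp := h.add_ne
  obtain ⟨-, hp, hm, -, hl, rfl⟩ := h
  rw [sum_insert fun h' => hl (mem_of_mem_erase (mem_of_mem_erase h')),
    ← add_sum_erase _ _ hp, ← add_sum_erase _ _ (mem_erase.2 ⟨hmp, hm⟩)]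
  ring

theorem Move.start_mem (h : Move board dirs B B' p q) : p ∈ B := by
  cases h with
  | single h | cons h _ => exact h.start_mem

theorem Move.end_mem (h : Move board dirs B B' p q) : q ∈ board := by
  induction h with
  | single h => exact h.end_mem
  | cons _ _ ih => exact ih

theorem Move.subset (h : Move board dirs B B' p q) (hB : B ⊆ board) : B' ⊆ board := by
  induction h with
  | single h => exact h.subset hB
  | cons h _ ih => exact ih (h.subset hB)

theorem Move.isOddOdd_end_iff (h : Move board dirs B B' p q) : IsOddOdd q ↔ IsOddOdd p := by
  induction h with
  | single => exact isOddOdd_add_add _ _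
  | cons _ _ ih => exact ih.trans (isOddOdd_add_add _ _)

theorem MoveSeq.sum_le {l : List (Cell × Cell)} (f : Cell → ℕ) (k : ℕ)
    (hdrop : ∀ B B' p q, B ⊆ board → Move board dirs B B' p q → ∑ c ∈ B, f c ≤ ∑ c ∈ B', f c + k)
    (h : MoveSeq board dirs B B' l) (hB : B ⊆ board) :
    ∑ c ∈ B, f c ≤ ∑ c ∈ B', f c + k * l.length := by
  induction h with
  | nil => simp
  | cons h _ ih =>
    have := hdrop _ _ _ _ hB h
    have := ih (h.subset hB)
    simp only [List.length_cons]
    linarith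

end Moves

def corners33 : Finset Cell := {(-3,-1),(-3,1),(-1,-3),(-1,3),(1,-3),(1,3),(3,-1),(3,1)}

def inner33 : Finset Cell := {(-1,-1),(-1,1),(1,-1),(1,1)}

def weight33 (c : Cell) : ℕ := if c ∈ corners33 then 5 else if c ∈ inner33 then 1 else 0

theorem isOddOdd_of_mem_corners33 : ∀ c ∈ corners33, IsOddOdd c := by decide

theorem isOddOdd_of_mem_inner33 : ∀ c ∈ inner33, IsOddOdd c := by decide

theorem add_notMem_corners33_of_mem_board33 :
    ∀ p ∈ board33, ∀ d ∈ dirs8, p + d + d ∈ board33 → p + d ∉ corners33 := by decide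

theorem one_le_weight33 : ∀ c ∈ board33, IsOddOdd c → 1 ≤ weight33 c := by decide

theorem weight33_le_five (c : Cell) : weight33 c ≤ 5 := by
  unfold weight33; split_ifs <;> omega

theorem weight33_eq_zero {c : Cell} (h : ¬IsOddOdd c) : weight33 c = 0 := by
  have h₁ := mt (isOddOdd_of_mem_corners33 c) h
  have h₂ := mt (isOddOdd_of_mem_inner33 c) h
  simp [weight33, h₁, h₂]

theorem sum_weight33 (B : Pos) :
    ∑ c ∈ B, weight33 c = 5 * #(B ∩ corners33) + #(B ∩ inner33) := by
  have hdisj : ∀ c ∈ corners33, c ∉ inner33 := by decide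
  have hw (c : Cell) :
      weight33 c = 5 * (if c ∈ corners33 then 1 else 0) + if c ∈ inner33 then 1 else 0 := by
    by_cases hc : c ∈ corners33
    · simp [weight33, hc, hdisj c hc]
    · simp [weight33, hc]
  simp only [hw, sum_add_distrib, ← mul_sum, sum_boole, filter_mem_eq_inter, Nat.cast_id]

section Weight

variable {board : Finset Cell} {B B' : Pos} {p q : Cell}

theorem Move.sum_weight33_of_isOddOdd (h : Move board dirs8 B B' p q) (hp : IsOddOdd p) :
    ∑ c ∈ B, weight33 c + weight33 q = ∑ c ∈ B', weight33 c + weight33 p := by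
  induction h with
  | single h =>
    have := h.sum_add weight33
    rw [weight33_eq_zero (not_isOddOdd_add h.mem_dirs hp)] at this
    omega
  | cons h _ ih =>
    have := h.sum_add weight33
    rw [weight33_eq_zero (not_isOddOdd_add h.mem_dirs hp)] at this
    have := ih ((isOddOdd_add_add _ _).2 hp)
    omega

theorem IsJump.inter_corners33_subset {d : Cell} (h : IsJump board33 dirs8 B B' p d)
    (hB : B ⊆ board33) (hp : ¬IsOddOdd p) : B ∩ corners33 ⊆ B' := by
  obtain ⟨hd, hpB, -, hl, -, rfl⟩ := h
  intro c hc
  obtain ⟨hcB, hcC⟩ := mem_inter.1 hc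
  have hcp : c ≠ p := by rintro rfl; exact hp (isOddOdd_of_mem_corners33 c hcC)
  have hcm : c ≠ p + d := by rintro rfl; exact add_notMem_corners33_of_mem_board33 p (hB hpB) d hd hl hcC
  exact mem_insert_of_mem (mem_erase.2 ⟨hcm, mem_erase.2 ⟨hcp, hcB⟩⟩)

theorem Move.inter_corners33_subset (h : Move board33 dirs8 B B' p q) (hB : B ⊆ board33)
    (hp : ¬IsOddOdd p) : B ∩ corners33 ⊆ B' := by
  induction h with
  | single h => exact h.inter_corners33_subset hB hp
  | cons h _ ih =>
    intro c hc
    exact ih (h.subset hB) (mt (isOddOdd_add_add _ _).1 hp)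
      (mem_inter.2 ⟨h.inter_corners33_subset hB hp hc, (mem_inter.1 hc).2⟩)

theorem Move.sum_weight33_le (h : Move board33 dirs8 B B' p q) (hB : B ⊆ board33) :
    ∑ c ∈ B, weight33 c ≤ ∑ c ∈ B', weight33 c + 4 := by
  by_cases hp : IsOddOdd p
  · have := h.sum_weight33_of_isOddOdd hp
    have := one_le_weight33 q h.end_mem (h.isOddOdd_end_iff.2 hp)
    have := weight33_le_five p
    omega
  · have hC : #(B ∩ corners33) ≤ #(B' ∩ corners33) :=
      card_le_card (subset_inter (h.inter_corners33_subset hB hp) inter_subset_right)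
    have hI : #(B ∩ inner33) ≤ 4 := (card_le_card inter_subset_right).trans (by decide)
    rw [sum_weight33, sum_weight33]
    omega

end Weight

def encode : List Cell → Pos → ℕ
  | [], _ => 0
  | c :: cs, B => Nat.bit (decide (c ∈ B)) (encode cs B)

def codeSum (f : Cell → ℕ) : List Cell → ℕ → ℕ
  | [], _ => 0
  | c :: cs, n => (if n.testBit 0 then f c else 0) + codeSum f cs (n / 2)

section Encoding

variable {cells : List Cell} {B B' : Pos} {i : ℕ} {a : Cell}

theorem testBit_encode (cells : List Cell) (B : Pos) (i : ℕ) :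
    (encode cells B).testBit i = cells[i]?.any (· ∈ B) := by
  induction cells generalizing i with
  | nil => simp [encode]
  | cons c cs ih =>
    cases i with
    | zero => simp [encode]
    | succ i => simp [encode, Nat.testBit_bit_succ, ih]

theorem encode_congr (h : ∀ c ∈ cells, c ∈ B ↔ c ∈ B') : encode cells B = encode cells B' := by
  induction cells with
  | nil => rfl
  | cons c cs ih =>
    simp only [encode, h c List.mem_cons_self, ih fun c hc => h c (List.mem_cons_of_mem _ hc)]

theorem encode_toggle (hcells : cells.Nodup) (hi : cells[i]? = some a)
    (hB : ∀ c, c ≠ a → (c ∈ B' ↔ c ∈ B)) (ha : a ∈ B' ↔ a ∉ B) :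
    encode cells B' = encode cells B ^^^ 2 ^ i := by
  have hlt : i < cells.length := (List.getElem?_eq_some_iff.1 hi).1
  refine Nat.eq_of_testBit_eq fun j => ?_
  rw [Nat.testBit_xor, Nat.testBit_two_pow, testBit_encode, testBit_encode]
  by_cases hij : i = j
  · subst hij
    by_cases haB : a ∈ B <;> simp [hi, ha, haB]
  · cases hj : cells[j]? with
    | none => simp [hij]
    | some c =>
      have hca : c ≠ a := by
        rintro rfl
        exact hij ((List.getElem?_inj hlt hcells).1 (hi.trans hj.symm))
      simp [hij, hB c hca]

theorem encode_erase (hcells : cells.Nodup) (hi : cells[i]? = some a) (ha : a ∈ B) :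
    encode cells (B.erase a) = encode cells B ^^^ 2 ^ i :=
  encode_toggle hcells hi (fun _ hc => by simp [hc]) (by simp [ha])

theorem encode_insert (hcells : cells.Nodup) (hi : cells[i]? = some a) (ha : a ∉ B) :
    encode cells (insert a B) = encode cells B ^^^ 2 ^ i :=
  encode_toggle hcells hi (fun _ hc => by simp [hc]) (by simp [ha])

theorem codeSum_encode (f : Cell → ℕ) (hcells : cells.Nodup) (hB : ∀ c ∈ B, c ∈ cells) :
    codeSum f cells (encode cells B) = ∑ c ∈ B, f c := by
  induction cells generalizing B with
  | nil =>
    rw [show B = ∅ from eq_empty_of_forall_notMem fun c hc => by simpa using hB c hc]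
    rfl
  | cons c cs ih =>
    obtain ⟨hc, hcs⟩ := List.nodup_cons.1 hcells
    have hrest : encode cs B = encode cs (B.erase c) :=
      encode_congr fun c' hc' => by simp [ne_of_mem_of_not_mem hc' hc]
    have hsum := ih hcs (B := B.erase c) fun c' hc' =>
      (List.mem_cons.1 (hB c' (mem_of_mem_erase hc'))).resolve_left (ne_of_mem_erase hc')
    simp only [codeSum, encode, Nat.testBit_bit_zero, Nat.bit_div_two, hrest, hsum]
    by_cases hcB : c ∈ B
    · simp [hcB, add_sum_erase]
    · simp [hcB, erase_eq_of_notMem]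

end Encoding

def jumpsFrom (cells ds : List Cell) (i : ℕ) : List (ℕ × ℕ) :=
  match cells[i]? with
  | none => []
  | some p => ds.filterMap fun d =>
      if p + d ∈ cells ∧ p + d + d ∈ cells then
        some (cells.idxOf (p + d), cells.idxOf (p + d + d))
      else none

/-- The codes of the positions reached from the position coded by `n` by a move of the peg on
`cells[i]` with at most `fuel` jumps. -/
def moveEnds (cells ds : List Cell) : ℕ → ℕ → ℕ → List ℕ
  | 0, _, _ => []
  | fuel + 1, n, i => (jumpsFrom cells ds i).flatMap fun (j, k) =>
      if n.testBit j && !n.testBit k then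
        (n ^^^ 2 ^ i ^^^ 2 ^ j ^^^ 2 ^ k) ::
          moveEnds cells ds fuel (n ^^^ 2 ^ i ^^^ 2 ^ j ^^^ 2 ^ k) k
      else []

def successors (cells ds : List Cell) (n : ℕ) : List ℕ :=
  (List.range cells.length).flatMap fun i =>
    if n.testBit i then moveEnds cells ds cells.length n i else []

/-- Whether the position coded by `target` may be reachable from the one coded by `n` in at most
`r` moves, given that every move lowers the total `f`-weight by at most `k`. -/
def mayReach (cells ds : List Cell) (f : Cell → ℕ) (k target : ℕ) : ℕ → ℕ → Bool
  | 0, n => n == target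
  | r + 1, n => n == target ||
      (decide (codeSum f cells n ≤ k * (r + 1)) &&
        (successors cells ds n).any (mayReach cells ds f k target r))

section Search

variable {board dirs : Finset Cell} {cells ds : List Cell} {B B' : Pos} {p d q : Cell}

theorem mem_jumpsFrom {i : ℕ} (hi : cells[i]? = some p) (hd : d ∈ ds) (hm : p + d ∈ cells)
    (hl : p + d + d ∈ cells) :
    (cells.idxOf (p + d), cells.idxOf (p + d + d)) ∈ jumpsFrom cells ds i := by
  simp only [jumpsFrom, hi, List.mem_filterMap]
  exact ⟨d, hd, by simp [hm, hl]⟩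

theorem IsJump.encode_eq (hcells : cells.Nodup) (hboard : ∀ c ∈ board, c ∈ cells)
    (h : IsJump board dirs B B' p d) (hB : B ⊆ board) {i : ℕ} (hi : cells[i]? = some p) :
    encode cells B' = encode cells B ^^^ 2 ^ i ^^^ 2 ^ cells.idxOf (p + d) ^^^
      2 ^ cells.idxOf (p + d + d) := by
  have hmp := h.add_ne
  obtain ⟨-, hp, hm, hl, hlB, rfl⟩ := h
  rw [encode_insert hcells (List.getElem?_idxOf (hboard _ hl))
      fun h' => hlB (mem_of_mem_erase (mem_of_mem_erase h')),
    encode_erase hcells (List.getElem?_idxOf (hboard _ (hB hm))) (mem_erase.2 ⟨hmp, hm⟩),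
    encode_erase hcells hi hp]

theorem IsJump.cons_moveEnds_subset (hcells : cells.Nodup) (hboard : ∀ c ∈ board, c ∈ cells)
    (hds : ∀ d ∈ dirs, d ∈ ds) (h : IsJump board dirs B B' p d) (hB : B ⊆ board) {i : ℕ}
    (hi : cells[i]? = some p) (fuel : ℕ) :
    encode cells B' :: moveEnds cells ds fuel (encode cells B') (cells.idxOf (p + d + d)) ⊆
      moveEnds cells ds (fuel + 1) (encode cells B) i := by
  have henc := h.encode_eq hcells hboard hB hi
  obtain ⟨hd, -, hm, hl, hlB, -⟩ := h
  have hbits : ((encode cells B).testBit (cells.idxOf (p + d)) &&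
      !(encode cells B).testBit (cells.idxOf (p + d + d))) = true := by
    simp [testBit_encode, List.getElem?_idxOf (hboard _ (hB hm)),
      List.getElem?_idxOf (hboard _ hl), hm, hlB]
  intro x hx
  simp only [moveEnds, List.mem_flatMap]
  refine ⟨_, mem_jumpsFrom hi (hds d hd) (hboard _ (hB hm)) (hboard _ hl), ?_⟩
  rwa [if_pos hbits, ← henc]

theorem Move.encode_mem_moveEnds (hcells : cells.Nodup) (hboard : ∀ c ∈ board, c ∈ cells)
    (hds : ∀ d ∈ dirs, d ∈ ds) (h : Move board dirs B B' p q) (hB : B ⊆ board) {i fuel : ℕ}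
    (hi : cells[i]? = some p) (hfuel : #B ≤ fuel) :
    encode cells B' ∈ moveEnds cells ds fuel (encode cells B) i := by
  obtain ⟨fuel, rfl⟩ : ∃ f, fuel = f + 1 :=
    Nat.exists_eq_add_one.2 (lt_of_lt_of_le (card_pos.2 ⟨p, h.start_mem⟩) hfuel)
  induction h generalizing i fuel with
  | single h => exact h.cons_moveEnds_subset hcells hboard hds hB hi fuel List.mem_cons_self
  | cons h hm ih =>
    have hcard := h.card_add_one
    refine h.cons_moveEnds_subset hcells hboard hds hB hi fuel (List.mem_cons_of_mem _ ?_)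
    obtain ⟨fuel, rfl⟩ : ∃ f, fuel = f + 1 :=
      Nat.exists_eq_add_one.2 (lt_of_lt_of_le (card_pos.2 ⟨_, hm.start_mem⟩) (by omega))
    exact ih (h.subset hB) (List.getElem?_idxOf (hboard _ h.end_mem)) fuel (by omega)

theorem Move.encode_mem_successors (hcells : cells.Nodup) (hboard : ∀ c ∈ board, c ∈ cells)
    (hds : ∀ d ∈ dirs, d ∈ ds) (h : Move board dirs B B' p q) (hB : B ⊆ board) :
    encode cells B' ∈ successors cells ds (encode cells B) := by
  have hp := h.start_mem
  have hpc := hboard _ (hB hp)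
  simp only [successors, List.mem_flatMap, List.mem_range]
  refine ⟨cells.idxOf p, List.idxOf_lt_length_iff.2 hpc, ?_⟩
  rw [if_pos (by simp [testBit_encode, List.getElem?_idxOf hpc, hp])]
  refine h.encode_mem_moveEnds hcells hboard hds hB (List.getElem?_idxOf hpc) ?_
  exact (card_le_card fun c hc => List.mem_toFinset.2 (hboard _ (hB hc))).trans
    (List.toFinset_card_le cells)

theorem MoveSeq.mayReach_eq_true {T : Pos} {l : List (Cell × Cell)} (f : Cell → ℕ) (k : ℕ)
    (hcells : cells.Nodup) (hboard : ∀ c ∈ board, c ∈ cells) (hds : ∀ d ∈ dirs, d ∈ ds)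
    (hdrop : ∀ B B' p q, B ⊆ board → Move board dirs B B' p q → ∑ c ∈ B, f c ≤ ∑ c ∈ B', f c + k)
    (hT : ∑ c ∈ T, f c = 0) (h : MoveSeq board dirs B T l) (hB : B ⊆ board) {r : ℕ}
    (hr : l.length ≤ r) :
    mayReach cells ds f k (encode cells T) r (encode cells B) = true := by
  induction h generalizing r with
  | nil => cases r <;> simp [mayReach]
  | cons hm hs ih =>
    rw [List.length_cons] at hr
    obtain ⟨r, rfl⟩ : ∃ r', r = r' + 1 := Nat.exists_eq_add_one.2 (by omega)
    have hsum := (MoveSeq.cons hm hs).sum_le f k hdrop hB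
    rw [hT, zero_add, List.length_cons] at hsum
    simp only [mayReach, Bool.or_eq_true, Bool.and_eq_true, decide_eq_true_eq, List.any_eq_true]
    refine Or.inr ⟨?_, _, hm.encode_mem_successors hcells hboard hds hB,
      ih hT (hm.subset hB) (by omega)⟩
    rw [codeSum_encode f hcells fun c hc => hboard c (hB hc)]
    exact hsum.trans (Nat.mul_le_mul_left k hr)

end Search

def cells33 : List Cell :=
  ((List.range 7 ×ˢ List.range 7).map fun (x, y) => ((x : ℤ) - 3, (y : ℤ) - 3)).filter
    fun c => |c.1| ≤ 1 ∨ |c.2| ≤ 1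

def dirs8List : List Cell := [(1,0),(-1,0),(0,1),(0,-1),(1,1),(1,-1),(-1,1),(-1,-1)]

theorem nodup_cells33 : cells33.Nodup := by decide

theorem mem_cells33_of_mem_board33 : ∀ c ∈ board33, c ∈ cells33 := by decide

theorem mem_dirs8List_of_mem_dirs8 : ∀ d ∈ dirs8, d ∈ dirs8List := by decide

theorem mayReach_board33_center_thirteen_eq_false :
    mayReach cells33 dirs8List weight33 4 (encode cells33 {(0, 0)}) 13
      (encode cells33 (board33.erase (0, 0))) = false := by
  decide +kernel

/-- on the standard 33-hole board under 8-move solitaire, no solution of the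
central game has fewer than 14 moves. -/
theorem stmt_17 (l : List (Cell × Cell))
    (h : MoveSeq board33 dirs8 (board33.erase (0, 0)) {((0 : ℤ), (0 : ℤ))} l) :
    14 ≤ l.length := by
  by_contra! hl
  have := h.mayReach_eq_true weight33 4 nodup_cells33 mem_cells33_of_mem_board33
    mem_dirs8List_of_mem_dirs8 (fun _ _ _ _ hB hm => hm.sum_weight33_le hB) (by decide)
    (erase_subset _ _) (Nat.le_of_lt_succ hl)
  rw [mayReach_board33_center_thirteen_eq_false] at this
  exact Bool.false_ne_true this
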